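/- The Natural Deduction system N(μK) is sound with respect to the finitary truth consequence relation: for every finite set Γ of formulae and every formula φ of the propositional modal μ-calculus, if Γ ⊢ φ is derivable in N(μK) then Γ ⊨ φ. -/
import Mathlib


namespace MuCalc

/-- Preformulae of the propositional modal μ-calculus over actions `Act` and atomic
propositional letters `Atom`; propositional variables are rendered by de Bruijn
indices (`var n`), and `mu A` binds the variable with index `0` in `A`. -/
inductive Fm (Act Atom : Type) : Type
  | atom : Atom → Fm Act Atom
  | ff   : Fm Act Atom
  | neg  : Fm Act Atom → Fm Act Atom
  | imp  : Fm Act Atom → Fm Act Atom → Fm Act Atom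
  | box  : Act → Fm Act Atom → Fm Act Atom
  | var  : ℕ → Fm Act Atom
  | mu   : Fm Act Atom → Fm Act Atom
  deriving DecidableEq

variable {Act Atom : Type}

/-- Shift: increment every free de Bruijn variable `≥ c` by one. -/
def shiftFm : ℕ → Fm Act Atom → Fm Act Atom
  | _, .atom p => .atom p
  | _, .ff => .ff
  | c, .neg A => .neg (shiftFm c A)
  | c, .imp A B => .imp (shiftFm c A) (shiftFm c B)
  | c, .box a A => .box a (shiftFm c A)
  | c, .var n => if n < c then .var n else .var (n + 1)
  | c, .mu A => .mu (shiftFm (c + 1) A)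

/-- Capture-avoiding substitution `A[ψ/x]` of the preformula `ψ` for the free
variable `x` of `A` (all other variables are left unchanged). -/
def subst : Fm Act Atom → ℕ → Fm Act Atom → Fm Act Atom
  | .atom p, _, _ => .atom p
  | .ff, _, _ => .ff
  | .neg A, x, ψ => .neg (subst A x ψ)
  | .imp A B, x, ψ => .imp (subst A x ψ) (subst B x ψ)
  | .box a A, x, ψ => .box a (subst A x ψ)
  | .var n, x, ψ => if n = x then ψ else .var n
  | .mu A, x, ψ => .mu (subst A (x + 1) (shiftFm 0 ψ))

/-- Instantiation of a bound variable: replace `var x` by `ψ` and lower the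
variables above `x`; `instVar A 0 ψ` is `A[ψ/x]` where `x` is the outermost
bound variable of `mu A`. -/
def instVar : Fm Act Atom → ℕ → Fm Act Atom → Fm Act Atom
  | .atom p, _, _ => .atom p
  | .ff, _, _ => .ff
  | .neg A, x, ψ => .neg (instVar A x ψ)
  | .imp A B, x, ψ => .imp (instVar A x ψ) (instVar B x ψ)
  | .box a A, x, ψ => .box a (instVar A x ψ)
  | .var n, x, ψ => if n = x then ψ else if x < n then .var (n - 1) else .var n
  | .mu A, x, ψ => .mu (instVar A (x + 1) (shiftFm 0 ψ))

/-- Abstraction of the free variable `x`, at binder depth `k`. -/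
def abstractVar : ℕ → ℕ → Fm Act Atom → Fm Act Atom
  | _, _, .atom p => .atom p
  | _, _, .ff => .ff
  | k, x, .neg A => .neg (abstractVar k x A)
  | k, x, .imp A B => .imp (abstractVar k x A) (abstractVar k x B)
  | k, x, .box a A => .box a (abstractVar k x A)
  | k, x, .var n => if n = x + k then .var k else if k ≤ n then .var (n + 1) else .var n
  | k, x, .mu A => .mu (abstractVar (k + 1) x A)

/-- `muBind x φ` is the formula `μx.φ`, binding the free variable `x` of `φ`. -/
def muBind (x : ℕ) (φ : Fm Act Atom) : Fm Act Atom := .mu (abstractVar 0 x φ)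

/-- Environments over a state set `S`: an assignment of a set of states to each
propositional variable. -/
abbrev Env (S : Type) := ℕ → Set S

/-- `Env.cons T ρ`: the environment `ρ[x ↦ T]` for the newly bound variable `0`. -/
def Env.cons {S : Type} (T : Set S) (ρ : Env S) : Env S
  | 0 => T
  | n + 1 => ρ n

/-- The semantics `⟦φ⟧_M ρ ⊆ S` in the model `M = ⟨S, V, R⟩`. -/
def sem {S : Type} (V : Atom → Set S) (R : Act → S → Set S) :
    Fm Act Atom → Env S → Set S
  | .atom p, _ => V p
  | .ff, _ => ∅
  | .neg A, ρ => (sem V R A ρ)ᶜ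
  | .imp A B, ρ => (sem V R A ρ)ᶜ ∪ sem V R B ρ
  | .box a A, ρ => {s | ∀ r ∈ R a s, r ∈ sem V R A ρ}
  | .var n, ρ => ρ n
  | .mu A, ρ => ⋂₀ {T : Set S | sem V R A (Env.cons T ρ) ⊆ T}

/-- The (truth) semantic consequence relation `Γ ⊨ φ`: in every model (over any
nonempty set of states) and every environment, the intersection of the meanings of
the hypotheses is included in the meaning of the conclusion. -/
def SemCons (Γ : Set (Fm Act Atom)) (φ : Fm Act Atom) : Prop :=
  ∀ (S : Type) [Nonempty S] (V : Atom → Set S) (R : Act → S → Set S) (ρ : Env S),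
    (⋂ γ ∈ Γ, sem V R γ ρ) ⊆ sem V R φ ρ

/-- The mutual positivity/negativity proof system: `Polin true x φ` is the judgement
`posin(x,φ)`, `Polin false x φ` is `negin(x,φ)`. -/
inductive Polin {Act Atom : Type} : Bool → ℕ → Fm Act Atom → Prop
  | atom (b : Bool) (x : ℕ) (p : Atom) : Polin b x (.atom p)
  | ff (b : Bool) (x : ℕ) : Polin b x .ff
  | varPos (x y : ℕ) : Polin true x (.var y)
  | varNeg {x y : ℕ} : y ≠ x → Polin false x (.var y)
  | neg {b : Bool} {x : ℕ} {A : Fm Act Atom} : Polin (!b) x A → Polin b x (.neg A)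
  | imp {b : Bool} {x : ℕ} {A B : Fm Act Atom} :
      Polin (!b) x A → Polin b x B → Polin b x (.imp A B)
  | box {b : Bool} {x : ℕ} {A : Fm Act Atom} (a : Act) :
      Polin b x A → Polin b x (.box a A)
  | mu {b : Bool} {x : ℕ} {A : Fm Act Atom} :
      Polin b (x + 1) A → Polin b x (.mu A)

/-- `posin(x,φ)`: `x` occurs only positively in `φ`. -/
def Posin (x : ℕ) (φ : Fm Act Atom) : Prop := Polin true x φ

/-- `negin(x,φ)`: `x` occurs only negatively in `φ`. -/
def Negin (x : ℕ) (φ : Fm Act Atom) : Prop := Polin false x φ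

/-- Well-formedness: every application of `mu` satisfies the positivity condition. -/
def Wf : Fm Act Atom → Prop
  | .atom _ => True
  | .ff => True
  | .neg A => Wf A
  | .imp A B => Wf A ∧ Wf B
  | .box _ A => Wf A
  | .var _ => True
  | .mu A => Posin 0 A ∧ Wf A

/-- `isin(x,A)`: the variable `x` occurs free in `A`. -/
def Isin : ℕ → Fm Act Atom → Prop
  | _, .atom _ => False
  | _, .ff => False
  | x, .neg A => Isin x A
  | x, .imp A B => Isin x A ∨ Isin x B
  | x, .box _ A => Isin x A
  | x, .var y => x = y
  | x, .mu A => Isin (x + 1) A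

/-- `notin(x,A)`: the variable `x` does not occur free in `A`. -/
def Notin : ℕ → Fm Act Atom → Prop
  | _, .atom _ => True
  | _, .ff => True
  | x, .neg A => Notin x A
  | x, .imp A B => Notin x A ∧ Notin x B
  | x, .box _ A => Notin x A
  | x, .var y => x ≠ y
  | x, .mu A => Notin (x + 1) A

/-- `HasOcc true x φ` (resp. `HasOcc false x φ`): the variable `x` has a free
occurrence in `φ` inside an even (resp. odd) number of negations, the left-hand
side of an implication counting as one additional negation. -/
def HasOcc : Bool → ℕ → Fm Act Atom → Prop
  | _, _, .atom _ => False
  | _, _, .ff => False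
  | b, x, .neg A => HasOcc (!b) x A
  | b, x, .imp A B => HasOcc (!b) x A ∨ HasOcc b x B
  | b, x, .box _ A => HasOcc b x A
  | b, x, .var y => x = y ∧ b = true
  | b, x, .mu A => HasOcc b (x + 1) A

/-- The Natural Deduction system N(μK), on sequents `Γ ⊢ φ` with `Γ` a finite set.
Rules are those of Figure 1; `weak` is the (admissible) weakening of the hypothesis
set; formation of `mu` formulae in the μ-rules carries the positivity condition. -/
inductive Deriv [DecidableEq Act] [DecidableEq Atom] :
    Finset (Fm Act Atom) → Fm Act Atom → Prop
  | hyp (Γ : Finset (Fm Act Atom)) (φ : Fm Act Atom) : Deriv (insert φ Γ) φ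
  | weak {Γ Δ : Finset (Fm Act Atom)} {φ} : Deriv Γ φ → Γ ⊆ Δ → Deriv Δ φ
  | raa {Γ φ} : Deriv (insert (.neg φ) Γ) .ff → Deriv Γ φ
  | impI {Γ φ ψ} : Deriv (insert φ Γ) ψ → Deriv Γ (.imp φ ψ)
  | impE {Γ φ ψ} : Deriv Γ (.imp φ ψ) → Deriv Γ φ → Deriv Γ ψ
  | negI {Γ φ} : Deriv (insert φ Γ) .ff → Deriv Γ (.neg φ)
  | ffI {Γ φ} : Deriv Γ φ → Deriv Γ (.neg φ) → Deriv Γ .ff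
  | boxI {φ} (a : Act) : Deriv ∅ φ → Deriv ∅ (.box a φ)
  | boxK {Γ φ ψ} {a : Act} :
      Deriv Γ (.box a (.imp φ ψ)) → Deriv Γ (.box a φ) → Deriv Γ (.box a ψ)
  | muI {Γ} {A : Fm Act Atom} :
      Posin 0 A → Deriv Γ (instVar A 0 (.mu A)) → Deriv Γ (.mu A)
  | muE {Γ} {A ψ : Fm Act Atom} :
      Posin 0 A → Deriv Γ (.mu A) → Deriv {instVar A 0 ψ} ψ → Deriv Γ ψ

/-- Conjunction as a defined connective: `A ∧ B := ¬(A ⊃ ¬B)`. -/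
def andFm (A B : Fm Act Atom) : Fm Act Atom := .neg (.imp A (.neg B))

/-- The conjunction `γ₁ ∧ … ∧ γₙ` of a list of formulae (the empty conjunction
being the truth `¬ff`). -/
def conjList : List (Fm Act Atom) → Fm Act Atom
  | [] => .neg .ff
  | γ :: rest => andFm γ (conjList rest)

/-- Insert a set `T` for variable `x` into an environment, shifting later variables. -/
def envInsert {S : Type} (x : ℕ) (T : Set S) (ρ : Env S) : Env S :=
  fun n => if n < x then ρ n else if n = x then T else ρ (n - 1)

lemma cons_eq_envInsert {S : Type} (T : Set S) (ρ : Env S) :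
    Env.cons T ρ = envInsert 0 T ρ := by
  funext n
  cases n with
  | zero => simp [Env.cons, envInsert]
  | succ m => simp [Env.cons, envInsert]

lemma envInsert_cons {S : Type} (x : ℕ) (U T : Set S) (ρ : Env S) :
    envInsert (x + 1) U (Env.cons T ρ) = Env.cons T (envInsert x U ρ) := by
  funext n
  cases n with
  | zero => simp [Env.cons, envInsert]
  | succ m =>
    simp only [Env.cons, envInsert, Nat.succ_lt_succ_iff, Nat.succ_sub_one,
      Nat.add_right_cancel_iff]
    by_cases h1 : m < x
    · simp [h1]
    · by_cases h2 : m = x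
      · simp [h1, h2]
      · have hx : 0 < m := by omega
        simp only [if_neg h1, if_neg h2]
        cases m with
        | zero => omega
        | succ k => simp [Env.cons]

lemma sem_shiftFm {S : Type} (V : Atom → Set S) (R : Act → S → Set S)
    (ψ : Fm Act Atom) : ∀ (c : ℕ) (T : Set S) (ρ : Env S),
    sem V R (shiftFm c ψ) (envInsert c T ρ) = sem V R ψ ρ := by
  induction ψ with
  | atom p => intro c T ρ; rfl
  | ff => intro c T ρ; rfl
  | neg A ih => intro c T ρ; simp [shiftFm, sem, ih]
  | imp A B ihA ihB => intro c T ρ; simp [shiftFm, sem, ihA, ihB]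
  | box a A ih => intro c T ρ; simp [shiftFm, sem, ih]
  | var n =>
    intro c T ρ
    by_cases h : n < c
    · simp [shiftFm, h, sem, envInsert]
    · have h1 : ¬ n + 1 < c := by omega
      have h2 : n + 1 ≠ c := by omega
      simp [shiftFm, h, sem, envInsert, h1, h2]
  | mu A ih =>
    intro c T ρ
    simp only [shiftFm, sem]
    refine congrArg Set.sInter ?_
    ext U
    simp only [Set.mem_setOf_eq]
    rw [← envInsert_cons, ih]

lemma sem_instVar {S : Type} (V : Atom → Set S) (R : Act → S → Set S)
    (A : Fm Act Atom) : ∀ (x : ℕ) (ψ : Fm Act Atom) (ρ : Env S),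
    sem V R (instVar A x ψ) ρ = sem V R A (envInsert x (sem V R ψ ρ) ρ) := by
  induction A with
  | atom p => intro x ψ ρ; rfl
  | ff => intro x ψ ρ; rfl
  | neg A ih => intro x ψ ρ; simp [instVar, sem, ih]
  | imp A B ihA ihB => intro x ψ ρ; simp [instVar, sem, ihA, ihB]
  | box a A ih => intro x ψ ρ; simp [instVar, sem, ih]
  | var n =>
    intro x ψ ρ
    by_cases h : n = x
    · simp [instVar, h, sem, envInsert]
    · by_cases h2 : x < n
      · have h3 : ¬ n < x := by omega
        simp [instVar, h, h2, sem, envInsert, h3]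
      · have h3 : n < x := by omega
        simp [instVar, h, h2, sem, envInsert, h3]
  | mu A ih =>
    intro x ψ ρ
    simp only [instVar, sem]
    refine congrArg Set.sInter ?_
    ext U
    simp only [Set.mem_setOf_eq]
    rw [ih]
    have hshift : sem V R (shiftFm 0 ψ) (Env.cons U ρ) = sem V R ψ ρ := by
      rw [cons_eq_envInsert]; exact sem_shiftFm V R ψ 0 U ρ
    rw [hshift, envInsert_cons]

/-- Monotonicity/antitonicity of the semantics in a variable that occurs only
positively/negatively. -/
lemma polin_mono {S : Type} (V : Atom → Set S) (R : Act → S → Set S) :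
    ∀ {b : Bool} {x : ℕ} {A : Fm Act Atom}, Polin b x A →
    ∀ ρ ρ' : Env S, (∀ y, y ≠ x → ρ y = ρ' y) → ρ x ⊆ ρ' x →
    (b = true → sem V R A ρ ⊆ sem V R A ρ') ∧
    (b = false → sem V R A ρ' ⊆ sem V R A ρ) := by
  intro b x A h
  induction h with
  | atom b x p => intro ρ ρ' _ _; exact ⟨fun _ => subset_rfl, fun _ => subset_rfl⟩
  | ff b x => intro ρ ρ' _ _; exact ⟨fun _ => subset_rfl, fun _ => subset_rfl⟩
  | varPos x y =>
    intro ρ ρ' heq hx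
    refine ⟨fun _ => ?_, fun hb => by simp at hb⟩
    by_cases h : y = x
    · subst h; exact hx
    · rw [show sem V R (Fm.var y) ρ = ρ y from rfl,
        show sem V R (Fm.var y) ρ' = ρ' y from rfl, heq y h]
  | varNeg hne =>
    rename_i x y
    intro ρ ρ' heq _
    have : ρ y = ρ' y := heq y hne
    constructor <;> intro _ <;>
      simp only [sem, this] <;> exact subset_rfl
  | neg hA ih =>
    rename_i b x A
    intro ρ ρ' heq hx
    have := ih ρ ρ' heq hx
    constructor
    · intro hb
      have : sem V R A ρ' ⊆ sem V R A ρ := this.2 (by simp [hb])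
      exact Set.compl_subset_compl.mpr this
    · intro hb
      have : sem V R A ρ ⊆ sem V R A ρ' := this.1 (by rw [hb]; rfl)
      exact Set.compl_subset_compl.mpr this
  | imp hA hB ihA ihB =>
    rename_i b x A B
    intro ρ ρ' heq hx
    have hA' := ihA ρ ρ' heq hx
    have hB' := ihB ρ ρ' heq hx
    constructor
    · intro hb
      have h1 : sem V R A ρ' ⊆ sem V R A ρ := hA'.2 (by simp [hb])
      have h2 : sem V R B ρ ⊆ sem V R B ρ' := hB'.1 hb
      exact Set.union_subset_union (Set.compl_subset_compl.mpr h1) h2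
    · intro hb
      have h1 : sem V R A ρ ⊆ sem V R A ρ' := hA'.1 (by rw [hb]; rfl)
      have h2 : sem V R B ρ' ⊆ sem V R B ρ := hB'.2 hb
      exact Set.union_subset_union (Set.compl_subset_compl.mpr h1) h2
  | box a hA ih =>
    rename_i b x A
    intro ρ ρ' heq hx
    have := ih ρ ρ' heq hx
    constructor
    · intro hb s hs r hr
      exact this.1 hb (hs r hr)
    · intro hb s hs r hr
      exact this.2 hb (hs r hr)
  | mu hA ih =>
    rename_i b x A
    intro ρ ρ' heq hx
    have hcons : ∀ T : Set S,
        (∀ y, y ≠ x + 1 → Env.cons T ρ y = Env.cons T ρ' y) ∧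
        Env.cons T ρ (x + 1) ⊆ Env.cons T ρ' (x + 1) := by
      intro T
      constructor
      · intro y hy
        cases y with
        | zero => rfl
        | succ m => exact heq m (by omega)
      · exact hx
    constructor
    · intro hb
      refine Set.sInter_subset_sInter ?_
      intro T hT
      have hmono : sem V R A (Env.cons T ρ) ⊆ sem V R A (Env.cons T ρ') :=
        (ih (Env.cons T ρ) (Env.cons T ρ') (hcons T).1 (hcons T).2).1 hb
      exact hmono.trans hT
    · intro hb
      refine Set.sInter_subset_sInter ?_
      intro T hT
      have hmono : sem V R A (Env.cons T ρ') ⊆ sem V R A (Env.cons T ρ) :=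
        (ih (Env.cons T ρ) (Env.cons T ρ') (hcons T).1 (hcons T).2).2 hb
      exact hmono.trans hT

lemma cons_mono_aux {S : Type} {T T' : Set S} (ρ : Env S) :
    (∀ y, y ≠ 0 → Env.cons T ρ y = Env.cons T' ρ y) := by
  intro y hy; cases y with
  | zero => exact absurd rfl hy
  | succ m => rfl

/-- The unfolding of `μA` is contained in `μA` (monotone case). -/
lemma mu_unfold_subset {S : Type} (V : Atom → Set S) (R : Act → S → Set S)
    {A : Fm Act Atom} (hpos : Posin 0 A) (ρ : Env S) :
    sem V R A (Env.cons (sem V R (Fm.mu A) ρ) ρ) ⊆ sem V R (Fm.mu A) ρ := by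
  intro s hs
  simp only [sem, Set.mem_sInter, Set.mem_setOf_eq]
  intro T hT
  have hsub : sem V R (Fm.mu A) ρ ⊆ T := Set.sInter_subset_of_mem hT
  have hmono : sem V R A (Env.cons (sem V R (Fm.mu A) ρ) ρ) ⊆
      sem V R A (Env.cons T ρ) :=
    (polin_mono V R hpos _ _ (cons_mono_aux ρ) hsub).1 rfl
  exact hT (hmono hs)

/-- The least prefixed point property of `μA`. -/
lemma mu_least {S : Type} (V : Atom → Set S) (R : Act → S → Set S)
    {A : Fm Act Atom} (ρ : Env S) {T : Set S}
    (hT : sem V R A (Env.cons T ρ) ⊆ T) :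
    sem V R (Fm.mu A) ρ ⊆ T :=
  Set.sInter_subset_of_mem hT

/-- soundness of N(μK) with respect to the finitary truth consequence
relation: for finite `Γ` and `φ` formulae, `Γ ⊢ φ` implies `Γ ⊨ φ`. -/
theorem soundness {Act Atom : Type} [DecidableEq Act] [DecidableEq Atom]
    (Γ : Finset (Fm Act Atom)) (φ : Fm Act Atom)
    (hΓ : ∀ γ ∈ Γ, Wf γ) (hφ : Wf φ)
    (h : Deriv Γ φ) : SemCons (↑Γ) φ := by
  clear hΓ hφ
  induction h with
  | hyp Γ φ =>
    intro S _ V R ρ s hs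
    have := Set.mem_iInter₂.mp hs φ (by simp)
    exact this
  | weak hd hsub ih =>
    intro S _ V R ρ s hs
    refine ih S V R ρ ?_
    refine Set.mem_iInter₂.mpr ?_
    intro γ hγ
    exact Set.mem_iInter₂.mp hs γ (hsub hγ)
  | raa hd ih =>
    rename_i Γ φ
    intro S _ V R ρ s hs
    by_contra hns
    have hs' : s ∈ ⋂ γ ∈ (↑(insert (Fm.neg φ) Γ) : Set (Fm Act Atom)), sem V R γ ρ := by
      refine Set.mem_iInter₂.mpr ?_
      intro γ hγ
      simp only [Finset.coe_insert, Set.mem_insert_iff, Finset.mem_coe] at hγ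
      rcases hγ with rfl | hγ
      · exact hns
      · exact Set.mem_iInter₂.mp hs γ (by simpa using hγ)
    exact (ih S V R ρ hs' : s ∈ (∅ : Set S))
  | impI hd ih =>
    rename_i Γ φ ψ
    intro S _ V R ρ s hs
    simp only [sem, Set.mem_union, Set.mem_compl_iff]
    by_cases hφs : s ∈ sem V R φ ρ
    · right
      refine ih S V R ρ ?_
      refine Set.mem_iInter₂.mpr ?_
      intro γ hγ
      simp only [Finset.coe_insert, Set.mem_insert_iff, Finset.mem_coe] at hγ
      rcases hγ with rfl | hγ
      · exact hφs
      · exact Set.mem_iInter₂.mp hs γ (by simpa using hγ)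
    · left; exact hφs
  | impE hd1 hd2 ih1 ih2 =>
    intro S _ V R ρ s hs
    have h1 := ih1 S V R ρ hs
    have h2 := ih2 S V R ρ hs
    simp only [sem, Set.mem_union, Set.mem_compl_iff] at h1
    rcases h1 with h1 | h1
    · exact absurd h2 h1
    · exact h1
  | negI hd ih =>
    rename_i Γ φ
    intro S _ V R ρ s hs
    simp only [sem, Set.mem_compl_iff]
    intro hφs
    have hs' : s ∈ ⋂ γ ∈ (↑(insert φ Γ) : Set (Fm Act Atom)), sem V R γ ρ := by
      refine Set.mem_iInter₂.mpr ?_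
      intro γ hγ
      simp only [Finset.coe_insert, Set.mem_insert_iff, Finset.mem_coe] at hγ
      rcases hγ with rfl | hγ
      · exact hφs
      · exact Set.mem_iInter₂.mp hs γ (by simpa using hγ)
    exact (ih S V R ρ hs' : s ∈ (∅ : Set S))
  | ffI hd1 hd2 ih1 ih2 =>
    intro S _ V R ρ s hs
    have h1 := ih1 S V R ρ hs
    have h2 := ih2 S V R ρ hs
    exact absurd h1 h2
  | boxI a hd ih =>
    intro S _ V R ρ s _
    intro r _
    refine ih S V R ρ ?_
    simp
  | boxK hd1 hd2 ih1 ih2 =>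
    intro S _ V R ρ s hs
    have h1 := ih1 S V R ρ hs
    have h2 := ih2 S V R ρ hs
    intro r hr
    have hi := h1 r hr
    have hf := h2 r hr
    simp only [sem, Set.mem_union, Set.mem_compl_iff] at hi
    rcases hi with hi | hi
    · exact absurd hf hi
    · exact hi
  | muI hpos hd ih =>
    rename_i Γ A
    intro S _ V R ρ s hs
    have h1 := ih S V R ρ hs
    rw [sem_instVar, ← cons_eq_envInsert] at h1
    exact mu_unfold_subset V R hpos ρ h1
  | muE hpos hd1 hd2 ih1 ih2 =>
    rename_i Γ A ψ
    intro S _ V R ρ s hs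
    have h1 := ih1 S V R ρ hs
    have hpre : sem V R A (Env.cons (sem V R ψ ρ) ρ) ⊆ sem V R ψ ρ := by
      intro r hr
      refine ih2 S V R ρ ?_
      refine Set.mem_iInter₂.mpr ?_
      intro γ hγ
      simp only [Finset.coe_singleton, Set.mem_singleton_iff] at hγ
      subst hγ
      rw [sem_instVar, ← cons_eq_envInsert]
      exact hr
    exact mu_least V R ρ hpre h1

end MuCalc
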